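/- arXiv:1202.4115 — 2 statements merged into one kernel-verified Lean document; each statement's English description precedes it below -/
import Mathlib

section
/- Let Δ be a finite group and R a finite abelian group, regarded as a trivial Δ-module. Let R[Δ] be the group ring and N = Σ_{σ∈Δ} σ ∈ R[Δ]. Then the Δ-invariant subgroup of the quotient module R[Δ]/(R·N) (with Δ acting by left translation) is isomorphic to Hom(Δ, R), via ψ ↦ class of Σ_{σ∈Δ} ψ(σ)σ. -/
section

variable (Δ R : Type) [Group Δ] [Fintype Δ] [AddCommGroup R]

/-- The subgroup `R·N` of the group ring `R[Δ] = (Δ → R)`, where `N = Σ_{σ∈Δ} σ`: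
it consists of the constant coefficient functions. -/
def normSub : AddSubgroup (Δ → R) :=
  (AddMonoidHom.mk' (fun r => Function.const Δ r) (fun _ _ => rfl)).range

/-- Left translation by `τ` on the group ring `R[Δ] = (Δ → R)`:
`(τ • f)(σ) = f(τ⁻¹σ)`. -/
def regTranslate (τ : Δ) : (Δ → R) →+ (Δ → R) :=
  AddMonoidHom.mk' (fun f σ => f (τ⁻¹ * σ)) (fun _ _ => rfl)

/-- The induced action of `τ ∈ Δ` on the quotient `R[Δ]/(R·N)`. -/
def translateQ (τ : Δ) : (Δ → R) ⧸ normSub Δ R →+ (Δ → R) ⧸ normSub Δ R :=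
  QuotientAddGroup.map _ _ (regTranslate Δ R τ) (by
    rintro f ⟨r, rfl⟩
    exact ⟨r, rfl⟩)

/-- The map `Hom(Δ, R) → R[Δ]/(R·N)`, `ψ ↦ [Σ_{σ∈Δ} ψ(σ)σ]`. -/
def homToQuot (ψ : Δ →* Multiplicative R) : (Δ → R) ⧸ normSub Δ R :=
  QuotientAddGroup.mk (fun σ => (ψ σ).toAdd)

lemma mem_normSub_iff (f : Δ → R) : f ∈ normSub Δ R ↔ ∃ r : R, ∀ σ, f σ = r := by
  constructor
  · rintro ⟨r, rfl⟩; exact ⟨r, fun _ => rfl⟩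
  · rintro ⟨r, h⟩; exact ⟨r, funext fun σ => (h σ).symm⟩

/-- Let `Δ` be a finite group and `R` a finite abelian group (trivial `Δ`-module). The
`Δ`-invariants of `R[Δ]/(R·N)` (with `Δ` acting by left translation) are isomorphic to
`Hom(Δ, R)` via `ψ ↦ [Σ_{σ∈Δ} ψ(σ)σ]`: this map is an injective homomorphism with
image exactly the invariants. -/
theorem invariants_of_group_ring_mod_norm (hR : Finite R) :
    Function.Injective (homToQuot Δ R) ∧
    Set.range (homToQuot Δ R) =
      {q : (Δ → R) ⧸ normSub Δ R | ∀ τ : Δ, translateQ Δ R τ q = q} ∧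
    ∀ ψ₁ ψ₂ : Δ →* Multiplicative R,
      homToQuot Δ R (ψ₁ * ψ₂) = homToQuot Δ R ψ₁ + homToQuot Δ R ψ₂ := by
  refine ⟨?_, ?_, ?_⟩
  · intro ψ₁ ψ₂ h
    have h' := (QuotientAddGroup.eq).mp h
    rw [mem_normSub_iff] at h'
    obtain ⟨r, hr⟩ := h'
    have h1 := hr 1
    simp only [Pi.add_apply, Pi.neg_apply, map_one] at h1
    have hr0 : r = 0 := by simpa using h1.symm
    ext σ
    have := hr σ
    rw [hr0] at this
    have : -(ψ₁ σ).toAdd + (ψ₂ σ).toAdd = 0 := this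
    have := neg_add_eq_zero.mp this
    exact Multiplicative.toAdd.injective this
  · ext q
    constructor
    · rintro ⟨ψ, rfl⟩ τ
      show translateQ Δ R τ (QuotientAddGroup.mk _) = _
      unfold translateQ
      rw [QuotientAddGroup.map_mk]
      show QuotientAddGroup.mk _ = QuotientAddGroup.mk _
      rw [QuotientAddGroup.eq]
      rw [mem_normSub_iff]
      refine ⟨-(ψ τ⁻¹).toAdd, fun σ => ?_⟩
      show -(ψ (τ⁻¹ * σ)).toAdd + (ψ σ).toAdd = -(ψ τ⁻¹).toAdd
      rw [map_mul]
      show -((ψ τ⁻¹).toAdd + (ψ σ).toAdd) + (ψ σ).toAdd = -(ψ τ⁻¹).toAdd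
      abel
    · intro hq
      obtain ⟨f, rfl⟩ := QuotientAddGroup.mk_surjective q
      have key : ∀ τ σ : Δ, f (τ⁻¹ * σ) = f σ - f τ + f 1 := by
        intro τ σ
        have h := hq τ
        unfold translateQ at h
        rw [QuotientAddGroup.map_mk, QuotientAddGroup.eq, mem_normSub_iff] at h
        obtain ⟨r, hr⟩ := h
        have h1 : -f (τ⁻¹ * σ) + f σ = r := hr σ
        have h2 : -f (τ⁻¹ * τ) + f τ = r := hr τ
        rw [inv_mul_cancel] at h2
        have : -f (τ⁻¹ * σ) + f σ = -f 1 + f τ := h1.trans h2.symm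
        have := congrArg (fun x => f (τ⁻¹ * σ) + x - f σ + f 1) this
        rw [show f (τ⁻¹*σ) + (-f (τ⁻¹*σ) + f σ) - f σ + f 1 = f 1 by abel] at this
        rw [this]; abel
      have hmul : ∀ a b : Δ, f (a * b) = f a + f b - f 1 := by
        intro a b
        have hinv : ∀ a : Δ, f a⁻¹ = f 1 - f a + f 1 := by
          intro a
          have := key a 1
          rw [mul_one] at this
          exact this
        have := key a⁻¹ b
        rw [inv_inv] at this
        rw [this, hinv a]
        abel
      refine ⟨MonoidHom.mk' (fun τ => Multiplicative.ofAdd (f τ - f 1)) ?_, ?_⟩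
      · intro a b
        apply Multiplicative.toAdd.injective
        show f (a * b) - f 1 = (f a - f 1) + (f b - f 1)
        rw [hmul a b]; abel
      · show QuotientAddGroup.mk _ = QuotientAddGroup.mk f
        rw [QuotientAddGroup.eq, mem_normSub_iff]
        refine ⟨f 1, fun σ => ?_⟩
        show -(f σ - f 1) + f σ = f 1
        abel
  · intro ψ₁ ψ₂
    show QuotientAddGroup.mk _ = QuotientAddGroup.mk _ + QuotientAddGroup.mk _
    rfl

end
end

section
/- Let G = ℤ/2 × ℤ/2 act trivially on ℤ/2. Then Ш²_ω(G, ℤ/2) := ⋂_{g∈G} Ker[H²(G, ℤ/2) → H²(⟨g⟩, ℤ/2)] is the trivial group. -/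
open groupCohomology

section Helper

variable {k G G' : Type} [CommRing k] [Group G] [Group G']

/-- Restriction of a representation along a group homomorphism. -/
noncomputable def resRep (φ : G' →* G) (A : Rep k G) : Rep k G' := Rep.of (A.ρ.comp φ)

/-- The old (Mathlib, Dec 2024) `groupCohomology.H2 A`: `Z²(G, A) ⧸ B²(G, A)`. -/
abbrev H2quot (A : Rep k G) : Type :=
  cocycles₂ A ⧸ (coboundaries₂ A).comap (cocycles₂ A).subtype

/-- Restriction of 2-cocycles along a group homomorphism. -/
noncomputable def resTwoCocycles (φ : G' →* G) (A : Rep k G) :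
    cocycles₂ A →ₗ[k] cocycles₂ (resRep φ A) where
  toFun f := ⟨fun p => f.1 (φ p.1, φ p.2), by
      refine (mem_cocycles₂_iff (A := resRep φ A) (fun p => f.1 (φ p.1, φ p.2))).2 ?_
      intro g h j
      have := (mem_cocycles₂_iff (A := A) f.1).1 f.2 (φ g) (φ h) (φ j)
      simp only [map_mul] at this ⊢
      exact this⟩
  map_add' f g := rfl
  map_smul' r f := rfl

/-- The restriction map on second group cohomology along a group homomorphism. -/
noncomputable def resH2 (φ : G' →* G) (A : Rep k G) :
    H2quot A →ₗ[k] H2quot (resRep φ A) :=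
  Submodule.mapQ _ _ (resTwoCocycles φ A) (by
    intro f hf
    simp only [Submodule.mem_comap] at hf ⊢
    obtain ⟨x, hx⟩ := hf
    refine ⟨fun g' => x (φ g'), funext fun p => ?_⟩
    have := congrFun hx (φ p.1, φ p.2)
    simp only [d₁₂_hom_apply] at this
    change A.ρ (φ p.1) (x (φ p.2)) - x (φ (p.1 * p.2)) + x (φ p.1) = f.1 (φ p.1, φ p.2)
    rw [map_mul]
    exact this)

/-- `Ш²_ω(G, A)`: classes in `H²(G, A)` restricting to `0` on every cyclic subgroup. -/
noncomputable def Sha2 (A : Rep k G) : Submodule k (H2quot A) :=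
  ⨅ g : G, LinearMap.ker (resH2 (Subgroup.zpowers g).subtype A)

end Helper

/-!
Restricting to `⟨g⟩ ≅ ℤ/2` kills the class of a cocycle `f` only if `f (g, g) = f (1, 1)`,
since a coboundary takes the value `2 x(g) - x(1) = x(1)` at `(g, g)`. Given this, the cocycle
identity at `(g, g, h)` and `(g, h, h)` gives `f (g, g h) = f (g, h) = f (g h, h)`, so on the
Klein group `f` takes a single value `t` off the diagonal, and `f` is the coboundary of the
cochain equal to `f (1, 1)` at `1` and to `t` elsewhere.
-/

section TwoTorsion

variable {M : Type} [AddCommGroup M]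

theorem eq_of_add_eq_zero_of_two_torsion (hM : ∀ m : M, m + m = 0) {a b : M} (h : a + b = 0) :
    a = b :=
  (neg_eq_of_add_eq_zero_left h).symm.trans (neg_eq_of_add_eq_zero_left (hM b))

theorem sub_add_self_of_two_torsion (hM : ∀ m : M, m + m = 0) (a b : M) : a - b + a = b := by
  rw [sub_add_eq_add_sub, hM, zero_sub]
  exact neg_eq_of_add_eq_zero_left (hM b)

end TwoTorsion

section TwoCocycles

variable {k G : Type} [CommRing k] [Group G]

theorem H2quot.mk_eq_zero_iff {A : Rep k G} (f : cocycles₂ A) :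
    (Submodule.Quotient.mk f : H2quot A) = 0 ↔
      ∃ x : G → A, ∀ g h : G, A.ρ g (x h) - x (g * h) + x g = f (g, h) := by
  rw [Submodule.Quotient.mk_eq_zero, Submodule.mem_comap, coboundaries₂, LinearMap.mem_range]
  refine exists_congr fun x => ⟨fun hx g h => ?_, fun hx => funext fun p => ?_⟩
  · simpa only [d₁₂_hom_apply, Submodule.subtype_apply, cocycles₂.val_eq_coe]
      using congrFun hx (g, h)
  · rw [d₁₂_hom_apply]; exact hx p.1 p.2

variable {M : Type} [AddCommGroup M] [Module k M]

theorem resH2_trivial_mk_eq_zero_iff {G' : Type} [Group G'] (φ : G' →* G)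
    (f : cocycles₂ (Rep.trivial k G M)) :
    resH2 φ (Rep.trivial k G M) (Submodule.Quotient.mk f) = 0 ↔
      ∃ x : G' → M, ∀ g h : G', x h - x (g * h) + x g = f (φ g, φ h) :=
  H2quot.mk_eq_zero_iff _

theorem cocycles₂_trivial_add_eq (f : cocycles₂ (Rep.trivial k G M)) (g h j : G) :
    f (g * h, j) + f (g, h) = f (h, j) + f (g, h * j) :=
  (mem_cocycles₂_iff f).1 f.2 g h j

theorem cocycles₂_trivial_map_one_snd (f : cocycles₂ (Rep.trivial k G M)) (g : G) :
    f (g, 1) = f (1, 1) :=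
  cocycles₂_map_one_snd f g

theorem cocycles₂_trivial_map_self_eq_of_resH2_eq_zero (hM : ∀ m : M, m + m = 0)
    (f : cocycles₂ (Rep.trivial k G M)) {g : G} (hg : g * g = 1)
    (hf : resH2 (Subgroup.zpowers g).subtype (Rep.trivial k G M) (Submodule.Quotient.mk f) = 0) :
    f (g, g) = f (1, 1) := by
  obtain ⟨x, hx⟩ := (resH2_trivial_mk_eq_zero_iff _ f).1 hf
  have hsq := hx ⟨g, Subgroup.mem_zpowers g⟩ ⟨g, Subgroup.mem_zpowers g⟩
  rw [show (⟨g, _⟩ * ⟨g, _⟩ : Subgroup.zpowers g) = 1 from Subtype.ext hg] at hsq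
  have hone := hx 1 1
  simp only [map_one, mul_one, sub_self, zero_add, Subgroup.subtype_apply] at hsq hone
  rw [← hsq, ← hone]
  exact sub_add_self_of_two_torsion hM _ _

theorem cocycles₂_trivial_map_mul_left_eq (hM : ∀ m : M, m + m = 0)
    (f : cocycles₂ (Rep.trivial k G M)) {g : G} (hg : g * g = 1) (hgg : f (g, g) = f (1, 1))
    (h : G) : f (g, g * h) = f (g, h) := by
  have hcoc := cocycles₂_trivial_add_eq f g g h
  rw [hg, cocycles₂_map_one_fst, hgg, hM, add_comm] at hcoc
  exact eq_of_add_eq_zero_of_two_torsion hM hcoc.symm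

theorem cocycles₂_trivial_map_mul_right_eq (hM : ∀ m : M, m + m = 0)
    (f : cocycles₂ (Rep.trivial k G M)) {h : G} (hh : h * h = 1) (hhh : f (h, h) = f (1, 1))
    (g : G) : f (g * h, h) = f (g, h) := by
  have hcoc := cocycles₂_trivial_add_eq f g h h
  rw [hh, cocycles₂_trivial_map_one_snd, hhh, hM] at hcoc
  exact eq_of_add_eq_zero_of_two_torsion hM hcoc

theorem H2quot.mk_eq_zero_of_diag_of_offDiag (hG : ∀ g : G, g * g = 1) (hM : ∀ m : M, m + m = 0)
    (f : cocycles₂ (Rep.trivial k G M)) (hdiag : ∀ g, f (g, g) = f (1, 1)) (t : M)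
    (hoff : ∀ g h, g ≠ 1 → h ≠ 1 → g ≠ h → f (g, h) = t) :
    (Submodule.Quotient.mk f : H2quot (Rep.trivial k G M)) = 0 := by
  classical
  refine (H2quot.mk_eq_zero_iff f).2 ⟨fun u => if u = 1 then f (1, 1) else t, fun g h => ?_⟩
  rcases eq_or_ne g 1 with rfl | hg
  · simp [cocycles₂_map_one_fst]
  rcases eq_or_ne h 1 with rfl | hh
  · simp [hg, cocycles₂_trivial_map_one_snd]
  rcases eq_or_ne g h with rfl | hgh
  · simpa [hg, hG, hdiag] using sub_add_self_of_two_torsion hM t (f (1, 1))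
  have hgh' : g * h ≠ 1 := fun h1 =>
    hgh ((eq_inv_of_mul_eq_one_left h1).trans (inv_eq_of_mul_eq_one_right (hG h)))
  simp [hg, hh, hgh', hoff g h hg hh hgh]

end TwoCocycles

section Klein

variable {k M : Type} [CommRing k] [AddCommGroup M] [Module k M]

local notation "K" => Multiplicative (ZMod 2 × ZMod 2)

theorem cocycles₂_klein_map_eq_of_ne (hM : ∀ m : M, m + m = 0)
    (f : cocycles₂ (Rep.trivial k K M))
    (hdiag : ∀ g, f (g, g) = f (1, 1)) {g h : K} (hg : g ≠ 1) (hh : h ≠ 1) (hgh : g ≠ h) :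
    f (g, h) = f (.ofAdd (1, 0), .ofAdd (0, 1)) := by
  have hK : ∀ u : K, u * u = 1 := by decide
  have left := fun g h => cocycles₂_trivial_map_mul_left_eq hM f (hK g) (hdiag g) h
  have right := fun g h => cocycles₂_trivial_map_mul_right_eq hM f (hK h) (hdiag h) g
  set a : K := .ofAdd (1, 0)
  set b : K := .ofAdd (0, 1)
  set c : K := .ofAdd (1, 1)
  have hab_c : a * b = c := by decide
  have hbc_a : b * c = a := by decide
  have hba_c : b * a = c := by decide
  have hca_b : c * a = b := by decide
  have hac : f (a, c) = f (a, b) := by rw [← hab_c, left]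
  have hcb : f (c, b) = f (a, b) := by rw [← hab_c, right]
  have hbc : f (b, c) = f (a, b) := by rw [← right, hbc_a, hac]
  have hba : f (b, a) = f (a, b) := by rw [← left, hba_c, hbc]
  have hca : f (c, a) = f (a, b) := by rw [← right, hca_b, hba]
  have hK_cases : ∀ u : K, u = 1 ∨ u = a ∨ u = b ∨ u = c := by decide
  rcases hK_cases g with rfl | rfl | rfl | rfl <;> rcases hK_cases h with rfl | rfl | rfl | rfl <;>
    first | contradiction | assumption | rfl

end Klein

/-- Let `G = ℤ/2 × ℤ/2` act trivially on `ℤ/2`. Then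
`Ш²_ω(G, ℤ/2) = ⋂_{g∈G} Ker[H²(G, ℤ/2) → H²(⟨g⟩, ℤ/2)]` is trivial. -/
theorem sha2_omega_klein_zmod2 :
    Sha2 (Rep.trivial ℤ (Multiplicative (ZMod 2 × ZMod 2)) (ZMod 2)) = ⊥ := by
  have hK : ∀ g : Multiplicative (ZMod 2 × ZMod 2), g * g = 1 := by decide
  have hM : ∀ m : ZMod 2, m + m = 0 := CharTwo.add_self_eq_zero
  refine eq_bot_iff.2 fun z hz => ?_
  obtain ⟨f, rfl⟩ := Submodule.Quotient.mk_surjective _ z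
  simp only [Sha2, Submodule.mem_iInf, LinearMap.mem_ker] at hz
  have hdiag g := cocycles₂_trivial_map_self_eq_of_resH2_eq_zero hM f (hK g) (hz g)
  exact (Submodule.mem_bot ℤ).2 <| H2quot.mk_eq_zero_of_diag_of_offDiag hK hM f hdiag _
    fun _ _ => cocycles₂_klein_map_eq_of_ne hM f hdiag
end
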